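/- The hybrid-style grammar for normal-order contexts (with the three non-terminals BN, NO', NE) and the uniform-style grammar (with the single non-terminal NO) generate exactly the same set of contexts: a context is derivable from NO' if and only if it is derivable from NO. -/
import Mathlib


/-- Pure λ-calculus terms (de Bruijn representation). -/
inductive Tm : Type
  | var : Nat → Tm
  | lam : Tm → Tm
  | app : Tm → Tm → Tm
deriving DecidableEq

/-- Shift the free variables (those ≥ `c`) of a term up by one. -/
def lift (c : Nat) : Tm → Tm
  | .var n => if n < c then .var n else .var (n + 1)
  | .lam b => .lam (lift (c + 1) b)
  | .app m n => .app (lift c m) (lift c n)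

/-- Capture-avoiding substitution `[N/k]B` (de Bruijn). -/
def subst (N : Tm) (k : Nat) : Tm → Tm
  | .var n => if n < k then .var n else if n = k then N else .var (n - 1)
  | .lam b => .lam (subst (lift 0 N) (k + 1) b)
  | .app m n => .app (subst N k m) (subst N k n)
/-- One-hole contexts of the pure λ-calculus. -/
inductive Ctx : Type
  | hole : Ctx
  | lam : Ctx → Ctx
  | appL : Ctx → Tm → Ctx
  | appR : Tm → Ctx → Ctx

/-- Composition of contexts: `C1.comp C2` replaces the hole of `C1` by `C2`. -/
def Ctx.comp : Ctx → Ctx → Ctx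
  | .hole, D => D
  | .lam C, D => .lam (Ctx.comp C D)
  | .appL C M, D => .appL (Ctx.comp C D) M
  | .appR M C, D => .appR M (Ctx.comp C D)
mutual
  /-- Normal forms: NF ::= λx.NF | x F1 … Fn with each Fi ∈ NF. -/
  inductive Nf : Tm → Prop
    | lam : ∀ B, Nf B → Nf (.lam B)
    | ne : ∀ M, NeNf M → Nf M
  /-- Neutral normal forms: x F1 … Fn with each Fi ∈ NF. -/
  inductive NeNf : Tm → Prop
    | var : ∀ n, NeNf (.var n)
    | app : ∀ M N, NeNf M → Nf N → NeNf (.app M N)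
end
/-- `x F1 … Fm` as a term: a variable applied to a list of terms. -/
def appVar (x : Nat) (fs : List Tm) : Tm := fs.foldl Tm.app (Tm.var x)

/-- `C N1 … Nk` as a context: a context applied to a list of terms. -/
def ctxApps (C : Ctx) (l : List Tm) : Ctx := l.foldl Ctx.appL C

/-- Normal-order contexts, generated by the uniform-style grammar
    NO ::= □ M1 … Mk | λx.NO | x F1 … Fm C N1 … Nk  (C ∈ NO, each Fi ∈ NF). -/
inductive NOC : Ctx → Prop
  | holeApps : ∀ l : List Tm, NOC (ctxApps .hole l)
  | lam : ∀ C, NOC C → NOC (.lam C)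
  | neu : ∀ (x : Nat) (fs : List Tm) (C : Ctx) (l : List Tm),
      (∀ F ∈ fs, Nf F) → NOC C → NOC (ctxApps (.appR (appVar x fs) C) l)
/-- Call-by-name contexts, generated by the grammar BN ::= □ | BN Λ. -/
inductive BNC : Ctx → Prop
  | hole : BNC .hole
  | app : ∀ (C : Ctx) (M : Tm), BNC C → BNC (.appL C M)

mutual
  /-- Hybrid-style normal-order contexts: NO' ::= BN | λx.NO' | NE. -/
  inductive NOC' : Ctx → Prop
    | bn : ∀ C, BNC C → NOC' C
    | lam : ∀ C, NOC' C → NOC' (.lam C)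
    | ne : ∀ C, NEC C → NOC' C
  /-- Hybrid-style neutral contexts: NE ::= NE Λ | x F1 … Fm NO'. -/
  inductive NEC : Ctx → Prop
    | app : ∀ (C : Ctx) (M : Tm), NEC C → NEC (.appL C M)
    | base : ∀ (x : Nat) (fs : List Tm) (C : Ctx),
        (∀ F ∈ fs, Nf F) → NOC' C → NEC (.appR (appVar x fs) C)
end

lemma ctxApps_cons (C : Ctx) (M : Tm) (l : List Tm) :
    ctxApps (.appL C M) l = ctxApps C (M :: l) := rfl

lemma ctxApps_append_one (C : Ctx) (l : List Tm) (M : Tm) :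
    ctxApps C (l ++ [M]) = .appL (ctxApps C l) M := by
  simp [ctxApps, List.foldl_append]

lemma bnc_exists {C : Ctx} (h : BNC C) : ∃ l : List Tm, C = ctxApps .hole l := by
  induction h with
  | hole => exact ⟨[], rfl⟩
  | app C M _ ih =>
    obtain ⟨l, rfl⟩ := ih
    exact ⟨l ++ [M], (ctxApps_append_one _ _ _).symm⟩

lemma noc'_noc : ∀ C, NOC' C → NOC C :=
  fun _ => NOC'.rec (motive_1 := fun C _ => NOC C)
    (motive_2 := fun C _ => ∀ l : List Tm, NOC (ctxApps C l))
    (fun _ hb => by obtain ⟨l, rfl⟩ := bnc_exists hb; exact NOC.holeApps l)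
    (fun C _ ih => NOC.lam C ih)
    (fun _ _ ih => ih [])
    (fun C M _ ih l => by rw [ctxApps_cons]; exact ih (M :: l))
    (fun x fs C hf _ ih l => NOC.neu x fs C l hf ih)

lemma bnc_apps : ∀ (l : List Tm) (C : Ctx), BNC C → BNC (ctxApps C l)
  | [], C, h => h
  | M :: l, C, h => bnc_apps l (.appL C M) (BNC.app C M h)

lemma nec_apps : ∀ (l : List Tm) (C : Ctx), NEC C → NEC (ctxApps C l)
  | [], C, h => h
  | M :: l, C, h => nec_apps l (.appL C M) (NEC.app C M h)

lemma noc_noc' : ∀ C, NOC C → NOC' C := by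
  intro C h
  induction h with
  | holeApps l => exact NOC'.bn _ (bnc_apps l _ BNC.hole)
  | lam C _ ih => exact NOC'.lam C ih
  | neu x fs C l hf _ ih =>
    exact NOC'.ne _ (nec_apps l _ (NEC.base x fs C hf ih))

/-- The hybrid-style grammar and the uniform-style grammar generate
    exactly the same set of normal-order contexts. -/
theorem hybrid_grammar_eq_uniform_grammar :
    ∀ C : Ctx, NOC' C ↔ NOC C :=
  fun C => ⟨noc'_noc C, noc_noc' C⟩
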